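/- arXiv:1504.04225 — 4 statements merged into one kernel-verified Lean document; each statement's English description precedes it below -/
import Mathlib

section
/- For every choice of (a,b,c) ∈ {2,3}^3, the 5×5 symmetric matrix M with rows (0,1,2,a,b),(1,0,1,2,c),(2,1,0,1,2),(a,2,1,0,1),(b,c,2,1,0) has second largest eigenvalue strictly greater than (17-√329)/2. -/
/-!
By the spectral theorem, `x ⬝ᵥ (A - t • 1) *ᵥ x = ∑ i, (λᵢ - t) yᵢ²` in eigencoordinates `y`, so this
form is nonpositive on the span of the eigenvectors with `λᵢ ≤ t`. A subspace on which the form is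
positive definite meets that span trivially, hence its dimension bounds the number of eigenvalues
above `t` (the easy half of Courant–Fischer). For each of the eight matrices `M` we exhibit a plane
on which `M + ½` is positive definite, so `λ₂(M) > -1/2 > (17 - √329)/2`, the last step being
`√329 > 18`.
-/

noncomputable def sortedEigenvalues {ι : Type*} [Fintype ι] [DecidableEq ι]
    (A : Matrix ι ι ℝ) (hA : A.IsHermitian) : List ℝ :=
  (Finset.univ.val.map hA.eigenvalues).sort (· ≤ ·)

/-- `eig A hA k` is the `k`-th largest eigenvalue of `A` (1-indexed). -/
noncomputable def eig {ι : Type*} [Fintype ι] [DecidableEq ι]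
    (A : Matrix ι ι ℝ) (hA : A.IsHermitian) (k : ℕ) : ℝ :=
  (sortedEigenvalues A hA)[Fintype.card ι - k]!

open Matrix

theorem List.lt_getElem!_of_le_countP {α : Type*} [LinearOrder α] [Inhabited α] {L : List α}
    (hL : L.Pairwise (· ≤ ·)) {t : α} {k : ℕ} (hk : 1 ≤ k) (hcount : k ≤ L.countP (t < ·)) :
    t < L[L.length - k]! := by
  have hlt : L.length - k < L.length := by
    have := hcount.trans List.countP_le_length
    omega
  rw [getElem!_pos L _ hlt]
  by_contra! hle
  have hhead : (L.take (L.length - k + 1)).countP (t < ·) = 0 := by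
    refine List.countP_eq_zero.2 fun a ha ↦ ?_
    obtain ⟨j, hj, rfl⟩ := List.getElem_of_mem ha
    simp only [List.length_take, List.getElem_take, decide_eq_true_eq, not_lt] at hj ⊢
    obtain hj' | hj' : j = L.length - k ∨ j < L.length - k := by omega
    · simpa only [hj'] using hle
    · exact (List.pairwise_iff_getElem.1 hL _ _ _ hlt hj').trans hle
  have htail : (L.drop (L.length - k + 1)).countP (t < ·) ≤ k - 1 :=
    List.countP_le_length.trans (by simp only [List.length_drop]; omega)
  rw [← L.take_append_drop (L.length - k + 1), List.countP_append] at hcount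
  omega

theorem binary_quadratic_pos {K : Type*} [Field K] [LinearOrder K] [IsStrictOrderedRing K]
    {a b c x y : K} (ha : 0 < a) (hdisc : b ^ 2 < a * c) (hxy : x ≠ 0 ∨ y ≠ 0) :
    0 < a * x ^ 2 + 2 * b * x * y + c * y ^ 2 := by
  have key : a * (a * x ^ 2 + 2 * b * x * y + c * y ^ 2) =
      (a * x + b * y) ^ 2 + (a * c - b ^ 2) * y ^ 2 := by
    ring
  refine pos_of_mul_pos_right (key ▸ ?_) ha.le
  rcases eq_or_ne y 0 with rfl | hy
  · have hx : x ≠ 0 := by simpa using hxy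
    simpa using sq_pos_of_ne_zero (mul_ne_zero ha.ne' hx)
  · have : 0 < (a * c - b ^ 2) * y ^ 2 := mul_pos (by linarith) (by positivity)
    positivity

namespace Matrix.IsHermitian

variable {ι : Type*} [Fintype ι] [DecidableEq ι] {A : Matrix ι ι ℝ}

theorem lt_eig_of_le_card (hA : A.IsHermitian) {t : ℝ} {k : ℕ} (hk : 1 ≤ k)
    (hcard : k ≤ (Finset.univ.filter fun i ↦ t < hA.eigenvalues i).card) :
    t < eig A hA k := by
  have hlength : (sortedEigenvalues A hA).length = Fintype.card ι := by
    simp [sortedEigenvalues]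
  rw [eig, ← hlength]
  refine List.lt_getElem!_of_le_countP (Multiset.pairwise_sort _ _) hk ?_
  rwa [← Multiset.coe_countP, Multiset.sort_eq, Multiset.countP_map]

theorem dotProduct_sub_smul_one_mulVec_eq_sum (hA : A.IsHermitian) (t : ℝ) (x : ι → ℝ) :
    x ⬝ᵥ (A - t • 1) *ᵥ x =
      ∑ i, (hA.eigenvalues i - t) * ((hA.eigenvectorUnitary : Matrix ι ι ℝ)ᵀ *ᵥ x) i ^ 2 := by
  set U : Matrix ι ι ℝ := (hA.eigenvectorUnitary : Matrix ι ι ℝ)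
  have hstar : star U = Uᵀ := conjTranspose_eq_transpose_of_trivial U
  have hUU : U * Uᵀ = 1 := hstar ▸ Unitary.coe_mul_star_self hA.eigenvectorUnitary
  have hdiag : A - t • 1 = U * diagonal (fun i ↦ hA.eigenvalues i - t) * Uᵀ := by
    conv_lhs => rw [hA.spectral_theorem, Unitary.conjStarAlgAut_apply]
    rw [show diagonal (fun i ↦ hA.eigenvalues i - t) = diagonal hA.eigenvalues - t • 1 by
        rw [smul_one_eq_diagonal, diagonal_sub],
      mul_sub, sub_mul, mul_smul_comm, mul_one, smul_mul_assoc, hUU, ← hstar]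
    rfl
  rw [hdiag, ← mulVec_mulVec, ← mulVec_mulVec, dotProduct_mulVec, ← mulVec_transpose]
  simp only [dotProduct, mulVec_diagonal]
  exact Finset.sum_congr rfl fun i _ ↦ by ring

theorem finrank_le_card_lt_eigenvalues (hA : A.IsHermitian) {t : ℝ} (W : Submodule ℝ (ι → ℝ))
    (hW : ∀ x ∈ W, x ≠ 0 → 0 < x ⬝ᵥ (A - t • 1) *ᵥ x) :
    Module.finrank ℝ W ≤ (Finset.univ.filter fun i ↦ t < hA.eigenvalues i).card := by
  set S := Finset.univ.filter fun i ↦ t < hA.eigenvalues i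
  set U : Matrix ι ι ℝ := (hA.eigenvectorUnitary : Matrix ι ι ℝ)
  -- `ker P` is the span of the eigenvectors with eigenvalue `≤ t`, where the form is nonpositive.
  let P : (ι → ℝ) →ₗ[ℝ] (S → ℝ) := LinearMap.funLeft ℝ ℝ Subtype.val ∘ₗ Uᵀ.mulVecLin
  have hdisj : Disjoint W (LinearMap.ker P) := by
    refine Submodule.disjoint_def.2 fun x hxW hxP ↦ by_contra fun hx ↦ ?_
    refine (hW x hxW hx).not_ge ?_
    rw [hA.dotProduct_sub_smul_one_mulVec_eq_sum]
    refine Finset.sum_nonpos fun i _ ↦ ?_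
    by_cases hi : t < hA.eigenvalues i
    · have : (Uᵀ *ᵥ x) i = 0 := congr_fun hxP ⟨i, by simpa [S] using hi⟩
      simp [U, this]
    · exact mul_nonpos_of_nonpos_of_nonneg (by linarith) (sq_nonneg _)
  have hW_ker := Submodule.finrank_add_finrank_le_of_disjoint hdisj
  have hrange_ker := P.finrank_range_add_finrank_ker
  have hrange : Module.finrank ℝ (LinearMap.range P) ≤ S.card :=
    (Submodule.finrank_le _).trans (by simp)
  simp only [Module.finrank_fintype_fun_eq_card] at hW_ker hrange_ker
  omega

theorem lt_eig_two_of_pair (hA : A.IsHermitian) {t : ℝ} {u v : ι → ℝ}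
    (hu : 0 < u ⬝ᵥ (A - t • 1) *ᵥ u)
    (huv : (u ⬝ᵥ (A - t • 1) *ᵥ v) ^ 2 < (u ⬝ᵥ (A - t • 1) *ᵥ u) * (v ⬝ᵥ (A - t • 1) *ᵥ v)) :
    t < eig A hA 2 := by
  set B := A - t • 1
  have hB : Bᵀ = B := by
    rw [← conjTranspose_eq_transpose_of_trivial, conjTranspose_sub, conjTranspose_smul,
      conjTranspose_one, hA.eq, star_trivial]
  have hform (α β : ℝ) : (α • u + β • v) ⬝ᵥ B *ᵥ (α • u + β • v) =
      (u ⬝ᵥ B *ᵥ u) * α ^ 2 + 2 * (u ⬝ᵥ B *ᵥ v) * α * β + (v ⬝ᵥ B *ᵥ v) * β ^ 2 := by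
    have hvu : v ⬝ᵥ B *ᵥ u = u ⬝ᵥ B *ᵥ v := by
      rw [dotProduct_mulVec, ← mulVec_transpose, hB, dotProduct_comm]
    simp only [mulVec_add, mulVec_smul, add_dotProduct, dotProduct_add, smul_dotProduct,
      dotProduct_smul, smul_eq_mul, hvu]
    ring
  have hpos (α β : ℝ) (h : α ≠ 0 ∨ β ≠ 0) : 0 < (α • u + β • v) ⬝ᵥ B *ᵥ (α • u + β • v) :=
    hform α β ▸ binary_quadratic_pos hu huv h
  have hli : LinearIndependent ℝ ![u, v] := LinearIndependent.pair_iff.2 fun α β h ↦ by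
    by_contra hαβ
    simpa [h] using hpos α β (by tauto)
  have hdim : Module.finrank ℝ (Submodule.span ℝ {u, v}) = 2 := by
    rw [← range_cons_cons_empty u v ![], finrank_span_eq_card hli, Fintype.card_fin]
  refine hA.lt_eig_of_le_card one_le_two ?_
  calc 2 = Module.finrank ℝ (Submodule.span ℝ {u, v}) := hdim.symm
    _ ≤ _ := hA.finrank_le_card_lt_eigenvalues _ fun x hx hx0 ↦ by
        obtain ⟨α, β, rfl⟩ := Submodule.mem_span_pair.1 hx
        exact hpos α β (by by_contra! h; simp [h] at hx0)

end Matrix.IsHermitian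

theorem forbidden_P5_submatrices (a b c : ℝ)
    (ha : a = 2 ∨ a = 3) (hb : b = 2 ∨ b = 3) (hc : c = 2 ∨ c = 3)
    (h : (!![(0:ℝ),1,2,a,b;1,0,1,2,c;2,1,0,1,2;a,2,1,0,1;b,c,2,1,0]).IsHermitian) :
    eig _ h 2 > (17 - Real.sqrt 329) / 2 := by
  have hthreshold : (17 - Real.sqrt 329) / 2 < -1 / 2 := by
    have : (18 : ℝ) < Real.sqrt 329 := Real.lt_sqrt (by norm_num) |>.2 (by norm_num)
    linarith
  refine hthreshold.trans ?_
  -- the planes `span {𝟙, v}` were found by a small integer search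
  obtain rfl | rfl := ha <;> obtain rfl | rfl := hb <;> obtain rfl | rfl := hc
  · refine h.lt_eig_two_of_pair (u := ![1, 1, 1, 1, 1]) (v := ![0, 1, 0, 1, 0]) ?_ ?_ <;>
      simp [dotProduct, mulVec, Fin.sum_univ_five, one_apply] <;> norm_num
  · refine h.lt_eig_two_of_pair (u := ![1, 1, 1, 1, 1]) (v := ![1, -1, 1, 0, 0]) ?_ ?_ <;>
      simp [dotProduct, mulVec, Fin.sum_univ_five, one_apply] <;> norm_num
  · refine h.lt_eig_two_of_pair (u := ![1, 1, 1, 1, 1]) (v := ![0, 1, 0, 1, 0]) ?_ ?_ <;>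
      simp [dotProduct, mulVec, Fin.sum_univ_five, one_apply] <;> norm_num
  · refine h.lt_eig_two_of_pair (u := ![1, 1, 1, 1, 1]) (v := ![1, -1, 1, 0, 0]) ?_ ?_ <;>
      simp [dotProduct, mulVec, Fin.sum_univ_five, one_apply] <;> norm_num
  · refine h.lt_eig_two_of_pair (u := ![1, 1, 1, 1, 1]) (v := ![0, 0, 1, -1, 1]) ?_ ?_ <;>
      simp [dotProduct, mulVec, Fin.sum_univ_five, one_apply] <;> norm_num
  · refine h.lt_eig_two_of_pair (u := ![1, 1, 1, 1, 1]) (v := ![1, 0, 0, 1, 0]) ?_ ?_ <;>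
      simp [dotProduct, mulVec, Fin.sum_univ_five, one_apply] <;> norm_num
  · refine h.lt_eig_two_of_pair (u := ![1, 1, 1, 1, 1]) (v := ![0, 1, -1, 1, 0]) ?_ ?_ <;>
      simp [dotProduct, mulVec, Fin.sum_univ_five, one_apply] <;> norm_num
  · refine h.lt_eig_two_of_pair (u := ![1, 1, 1, 1, 1]) (v := ![-1, 1, 0, -2, 1]) ?_ ?_ <;>
      simp [dotProduct, mulVec, Fin.sum_univ_five, one_apply] <;> norm_num
end

section
/- For every choice of (a,b) ∈ {2,3}^2, the 5×5 symmetric matrix with rows (0,1,2,a,2),(1,0,1,2,1),(2,1,0,1,2),(a,2,1,0,b),(2,1,2,b,0) has second largest eigenvalue strictly greater than (17-√329)/2. -/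
open Matrix

lemma prod_sub_nonpos_of_lt_of_forall_ne_le {ι R : Type*} [Fintype ι] [DecidableEq ι]
    [CommRing R] [LinearOrder R] [IsStrictOrderedRing R] {f : ι → R} {c : R} (j : ι)
    (hj : c < f j) (hle : ∀ i ≠ j, f i ≤ c) : ∏ i, (c - f i) ≤ 0 := by
  rw [← Finset.mul_prod_erase _ _ (Finset.mem_univ j)]
  refine mul_nonpos_of_nonpos_of_nonneg (sub_nonpos.mpr hj.le) (Finset.prod_nonneg fun i hi ↦ ?_)
  exact sub_nonneg.mpr (hle i (Finset.ne_of_mem_erase hi))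

namespace Matrix.IsHermitian

variable {ι : Type*} [Fintype ι] [DecidableEq ι] {A : Matrix ι ι ℝ} (hA : A.IsHermitian)

lemma eigenvalues_eq_eigenvalues₀_comp :
    hA.eigenvalues = hA.eigenvalues₀ ∘ (Fintype.equivOfCardEq (Fintype.card_fin _)).symm :=
  rfl

lemma sum_eigenvalues₀ : ∑ k, hA.eigenvalues₀ k = A.trace := by
  rw [hA.trace_eq_sum_eigenvalues, eigenvalues_eq_eigenvalues₀_comp,
    ← Equiv.sum_comp (Fintype.equivOfCardEq (Fintype.card_fin _)).symm]
  rfl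

lemma det_smul_one_sub_eq_prod_eigenvalues₀ (c : ℝ) :
    (c • (1 : Matrix ι ι ℝ) - A).det = ∏ k, (c - hA.eigenvalues₀ k) := by
  rw [← Equiv.prod_comp (Fintype.equivOfCardEq (Fintype.card_fin _)).symm, smul_one_eq_diagonal,
    ← scalar_apply, ← eval_charpoly, hA.charpoly_eq, Polynomial.eval_prod]
  simp [eigenvalues_eq_eigenvalues₀_comp]

lemma sortedEigenvalues_eq : sortedEigenvalues A hA = (List.ofFn hA.eigenvalues₀).reverse := by
  have hperm : Finset.univ.val.map hA.eigenvalues =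
      ((List.ofFn hA.eigenvalues₀).reverse : Multiset ℝ) := by
    rw [Multiset.coe_reverse, ← Fin.univ_val_map, eigenvalues_eq_eigenvalues₀_comp,
      ← Multiset.map_map]
    exact congrArg _ (Multiset.map_univ_val_equiv _)
  rw [sortedEigenvalues, hperm, Multiset.coe_sort]
  apply List.mergeSort_of_pairwise
  rw [List.pairwise_reverse, List.pairwise_ofFn]
  exact fun _ _ hij ↦ by simpa using hA.eigenvalues₀_antitone hij.le

lemma eig_succ_eq_eigenvalues₀ (k : Fin (Fintype.card ι)) :
    eig A hA (k + 1) = hA.eigenvalues₀ k := by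
  have hk := k.isLt
  rw [eig, sortedEigenvalues_eq, getElem!_pos _ _ (by simp; omega), List.getElem_reverse,
    List.getElem_ofFn]
  congr 1
  ext
  simp
  omega

theorem lt_eig_two_of_trace_eq_zero_of_det_pos (hcard : 2 ≤ Fintype.card ι)
    (htr : A.trace = 0) {c : ℝ} (hc : c < 0) (hdet : 0 < (c • (1 : Matrix ι ι ℝ) - A).det) :
    c < eig A hA 2 := by
  by_contra! hle
  set f := hA.eigenvalues₀
  have hf1 : f ⟨1, by omega⟩ ≤ c :=
    (hA.eig_succ_eq_eigenvalues₀ ⟨1, by omega⟩).symm.trans_le hle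
  have htop : c < f ⟨0, by omega⟩ := by
    by_contra! h
    have hneg : ∑ k, f k < 0 := Finset.sum_neg
      (fun k _ ↦ ((hA.eigenvalues₀_antitone (Nat.zero_le k.val)).trans h).trans_lt hc)
      ⟨⟨0, by omega⟩, Finset.mem_univ _⟩
    rw [hA.sum_eigenvalues₀, htr] at hneg
    exact hneg.false
  have hrest : ∀ k ≠ ⟨0, by omega⟩, f k ≤ c := fun k hk ↦
    (hA.eigenvalues₀_antitone (Nat.one_le_iff_ne_zero.mpr (Fin.val_ne_of_ne hk))).trans hf1
  have hprod := prod_sub_nonpos_of_lt_of_forall_ne_le _ htop hrest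
  rw [hA.det_smul_one_sub_eq_prod_eigenvalues₀] at hdet
  exact hdet.not_ge hprod

end Matrix.IsHermitian

lemma det_smul_one_sub_H2 (a b c : ℝ) :
    (c • (1 : Matrix (Fin 5) (Fin 5) ℝ) -
        !![0, 1, 2, a, 2; 1, 0, 1, 2, 1; 2, 1, 0, 1, 2; a, 2, 1, 0, b; 2, 1, 2, b, 0]).det =
      c ^ 5 - (20 + a ^ 2 + b ^ 2) * c ^ 3 - (32 + 8 * a + 8 * b + 4 * a * b) * c ^ 2
        + (26 - 26 * a - 26 * b - 10 * a * b + 6 * a ^ 2 + 6 * b ^ 2) * c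
        + (52 - 20 * a - 20 * b + 4 * a ^ 2 + 4 * b ^ 2 - 4 * a * b) := by
  simp [det_succ_row_zero, Fin.sum_univ_succ, Fin.succAbove, one_apply]
  ring

/- Modulo `c² = 17c + 10` the polynomial is `αc + β`; the bound on `c` must be sharp, since for
`a = b = 3` it is `78845c + 44878`, whose root `≈ -0.569193` is just below `c ≈ -0.569179`. -/
lemma H2_charpoly_pos {a b c : ℝ} (ha : a = 2 ∨ a = 3) (hb : b = 2 ∨ b = 3)
    (hroot : c ^ 2 = 17 * c + 10) (hc : -0.56918 < c) :
    0 < c ^ 5 - (20 + a ^ 2 + b ^ 2) * c ^ 3 - (32 + 8 * a + 8 * b + 4 * a * b) * c ^ 2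
        + (26 - 26 * a - 26 * b - 10 * a * b + 6 * a ^ 2 + 6 * b ^ 2) * c
        + (52 - 20 * a - 20 * b + 4 * a ^ 2 + 4 * b ^ 2 - 4 * a * b) := by
  have hc3 : c ^ 3 = 299 * c + 170 := by linear_combination (c + 17) * hroot
  have hc5 : c ^ 5 = 92291 * c + 52530 := by
    linear_combination (c ^ 3 + 17 * c ^ 2 + 299 * c + 5253) * hroot
  rcases ha with rfl | rfl <;> rcases hb with rfl | rfl <;> linarith

theorem forbidden_H2_submatrices (a b : ℝ)
    (ha : a = 2 ∨ a = 3) (hb : b = 2 ∨ b = 3)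
    (h : (!![(0:ℝ),1,2,a,2;1,0,1,2,1;2,1,0,1,2;a,2,1,0,b;2,1,2,b,0]).IsHermitian) :
    eig _ h 2 > (17 - Real.sqrt 329) / 2 := by
  have hsqrt_lt : √329 < 18.13836 := by
    rw [Real.sqrt_lt' (by norm_num)]
    norm_num
  have hsqrt_gt : 17 < √329 := by
    rw [Real.lt_sqrt (by norm_num)]
    norm_num
  have hroot : ((17 - √329) / 2) ^ 2 = 17 * ((17 - √329) / 2) + 10 := by
    linear_combination (1 / 4 : ℝ) * Real.sq_sqrt (show (0 : ℝ) ≤ 329 by norm_num)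
  refine h.lt_eig_two_of_trace_eq_zero_of_det_pos (by simp) ?_ (by linarith) ?_
  · simp [trace, Fin.sum_univ_five]
  · rw [det_smul_one_sub_H2]
    exact H2_charpoly_pos ha hb hroot (by linarith)
end

section
/- If a connected graph G satisfies λ_2(D(G)) ≤ (17-√329)/2, then G has diameter at most 3. -/
open Finset Matrix Module Function

section ExtendByZero

variable {R ι κ : Type*} [CommSemiring R] [Fintype ι] [Fintype κ] {p : κ → ι}

theorem Matrix.extend_zero_dotProduct (hp : Injective p) (x : κ → R) (y : ι → R) :
    extend p x 0 ⬝ᵥ y = x ⬝ᵥ (y ∘ p) := by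
  classical
  calc extend p x 0 ⬝ᵥ y = ∑ i ∈ univ.map ⟨p, hp⟩, extend p x 0 i * y i := by
        refine (sum_subset (subset_univ _) fun i _ hi => ?_).symm
        rw [extend_apply' _ _ _ (by simpa using hi), Pi.zero_apply, zero_mul]
    _ = x ⬝ᵥ (y ∘ p) := by simp [dotProduct, hp.extend_apply]

theorem Matrix.mulVec_extend_zero_comp (hp : Injective p) (A : Matrix ι ι R) (x : κ → R) :
    (A *ᵥ extend p x 0) ∘ p = A.submatrix p p *ᵥ x := by
  ext k
  show (fun j => A (p k) j) ⬝ᵥ extend p x 0 = (fun j => A (p k) (p j)) ⬝ᵥ x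
  rw [dotProduct_comm, extend_zero_dotProduct hp, dotProduct_comm]
  rfl

end ExtendByZero

namespace Matrix.IsHermitian

variable {ι : Type*} [Fintype ι] [DecidableEq ι] {A : Matrix ι ι ℝ} (hA : A.IsHermitian)

theorem dotProduct_eq_sum_eigenvectorBasis (x y : ι → ℝ) :
    x ⬝ᵥ y = ∑ i, (⇑(hA.eigenvectorBasis i) ⬝ᵥ x) * (⇑(hA.eigenvectorBasis i) ⬝ᵥ y) := by
  have := hA.eigenvectorBasis.sum_inner_mul_inner (WithLp.toLp 2 x) (WithLp.toLp 2 y)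
  simpa [EuclideanSpace.inner_eq_star_dotProduct, dotProduct_comm] using this.symm

theorem dotProduct_mulVec_eq_sum_eigenvectorBasis (x y : ι → ℝ) :
    x ⬝ᵥ (A *ᵥ y) = ∑ i, hA.eigenvalues i *
      ((⇑(hA.eigenvectorBasis i) ⬝ᵥ x) * (⇑(hA.eigenvectorBasis i) ⬝ᵥ y)) := by
  have hAT : Aᵀ = A := by simpa [conjTranspose_eq_transpose_of_trivial] using hA.eq
  have hvecMul : ∀ v, v ᵥ* A = A *ᵥ v := fun v => by simpa [hAT] using vecMul_transpose A v
  rw [hA.dotProduct_eq_sum_eigenvectorBasis]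
  refine sum_congr rfl fun i _ => ?_
  rw [dotProduct_mulVec, hvecMul, hA.mulVec_eigenvectorBasis, smul_dotProduct, smul_eq_mul]
  ring

theorem finrank_le_card_filter_le_eigenvalues {c : ℝ} (V : Submodule ℝ (ι → ℝ))
    (hV : ∀ x ∈ V, c * (x ⬝ᵥ x) ≤ x ⬝ᵥ (A *ᵥ x)) :
    finrank ℝ V ≤ #{i | c ≤ hA.eigenvalues i} := by
  by_contra! hlt
  -- a nonzero `x ∈ V` orthogonal to every eigenvector with eigenvalue `≥ c` has `xᵀ A x < c ‖x‖²`
  let coords : V →ₗ[ℝ] ({i // c ≤ hA.eigenvalues i} → ℝ) :=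
    (of fun (i : {i // c ≤ hA.eigenvalues i}) j => hA.eigenvectorBasis i j).mulVecLin ∘ₗ
      V.subtype
  have hker : LinearMap.ker coords ≠ ⊥ :=
    LinearMap.ker_ne_bot_of_finrank_lt (by simpa [Fintype.card_subtype] using hlt)
  obtain ⟨⟨x, hxV⟩, hx, hx0⟩ := Submodule.exists_mem_ne_zero_of_ne_bot hker
  have hcoord : ∀ i, c ≤ hA.eigenvalues i → ⇑(hA.eigenvectorBasis i) ⬝ᵥ x = 0 := fun i hi =>
    congrFun (LinearMap.mem_ker.mp hx) ⟨i, hi⟩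
  have hsum : ∑ i, (⇑(hA.eigenvectorBasis i) ⬝ᵥ x) * (⇑(hA.eigenvectorBasis i) ⬝ᵥ x) ≠ 0 := by
    rw [← hA.dotProduct_eq_sum_eigenvectorBasis, Ne, dotProduct_self_eq_zero]
    simpa using hx0
  obtain ⟨j, -, hj⟩ := exists_ne_zero_of_sum_ne_zero hsum
  have hform_lt : x ⬝ᵥ (A *ᵥ x) < c * (x ⬝ᵥ x) := by
    rw [hA.dotProduct_mulVec_eq_sum_eigenvectorBasis, hA.dotProduct_eq_sum_eigenvectorBasis,
      mul_sum]
    refine sum_lt_sum (fun i _ => ?_) ⟨j, mem_univ j, ?_⟩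
    · by_cases hi : c ≤ hA.eigenvalues i
      · simp [hcoord i hi]
      · exact mul_le_mul_of_nonneg_right (not_le.mp hi).le (mul_self_nonneg _)
    · have hj' : hA.eigenvalues j < c := not_le.mp fun h => hj (by simp [hcoord j h])
      exact mul_lt_mul_of_pos_right hj' (lt_of_le_of_ne (mul_self_nonneg _) (Ne.symm hj))
  exact (hV x hxV).not_gt hform_lt

theorem finrank_le_card_filter_le_eigenvalues_of_submatrix {κ : Type*} [Fintype κ] {p : κ → ι}
    (hp : Injective p) {c : ℝ} (V : Submodule ℝ (κ → ℝ))
    (hV : ∀ x ∈ V, c * (x ⬝ᵥ x) ≤ x ⬝ᵥ (A.submatrix p p *ᵥ x)) :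
    finrank ℝ V ≤ #{i | c ≤ hA.eigenvalues i} := by
  let E := ExtendByZero.linearMap ℝ p
  have hE : Injective E := extend_injective hp (0 : ι → ℝ)
  rw [(V.equivMapOfInjective E hE).finrank_eq]
  refine hA.finrank_le_card_filter_le_eigenvalues _ ?_
  rintro _ ⟨x, hx, rfl⟩
  have hEx : extend p x 0 ∘ p = x := funext (hp.extend_apply x 0)
  show c * (extend p x 0 ⬝ᵥ extend p x 0) ≤ extend p x 0 ⬝ᵥ (A *ᵥ extend p x 0)
  rw [extend_zero_dotProduct hp, extend_zero_dotProduct hp, hEx, mulVec_extend_zero_comp hp]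
  exact hV x hx

end Matrix.IsHermitian

theorem le_eig_of_le_card_filter {ι : Type*} [Fintype ι] [DecidableEq ι] {A : Matrix ι ι ℝ}
    (hA : A.IsHermitian) {c : ℝ} {k : ℕ} (hk : 0 < k) (h : k ≤ #{i | c ≤ hA.eigenvalues i}) :
    c ≤ eig A hA k := by
  set l := sortedEigenvalues A hA
  set N := Fintype.card ι
  have hlen : l.length = N := by simp [l, sortedEigenvalues, N]
  have hsorted : l.Pairwise (· ≤ ·) := Multiset.pairwise_sort _ _
  have hcount : l.countP (c ≤ ·) = #{i | c ≤ hA.eigenvalues i} := by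
    simp only [← Multiset.coe_countP, l, sortedEigenvalues, Multiset.sort_eq, Multiset.countP_map]
    rfl
  have hidx : N - k < l.length := by
    have := h.trans (card_le_univ _)
    omega
  rw [eig, getElem!_pos l _ hidx]
  by_contra! hlt
  have htake : (l.take (N - k + 1)).countP (c ≤ ·) = 0 := by
    rw [List.countP_eq_zero]
    intro t ht
    obtain ⟨i, hi, rfl⟩ := List.mem_iff_getElem.mp ht
    rw [List.length_take] at hi
    rw [List.getElem_take]
    have hle : l[i] ≤ l[N - k] :=
      hsorted.rel_get_of_le (a := ⟨i, by omega⟩) (b := ⟨N - k, hidx⟩) (Fin.mk_le_mk.mpr (by omega))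
    simpa using hle.trans_lt hlt
  have hdrop : (l.drop (N - k + 1)).countP (c ≤ ·) ≤ k - 1 :=
    List.countP_le_length.trans (by simp only [List.length_drop, hlen]; omega)
  have hsplit := List.countP_append (l₁ := l.take (N - k + 1)) (l₂ := l.drop (N - k + 1))
    (p := (c ≤ ·))
  rw [List.take_append_drop] at hsplit
  omega

namespace SimpleGraph.Walk

variable {V : Type*} {G : SimpleGraph V} {u v : V}

theorem dist_getVert_le (w : G.Walk u v) {i j : ℕ} (hij : i ≤ j) :
    G.dist (w.getVert i) (w.getVert j) ≤ j - i := by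
  have h := dist_le ((w.drop i).take (j - i))
  rw [take_length] at h
  rw [drop_getVert, Nat.add_sub_cancel' hij] at h
  exact h.trans (min_le_left _ _)

theorem dist_getVert_of_length_eq_dist (w : G.Walk u v) (hw : w.length = G.dist u v)
    {i j : ℕ} (hij : i ≤ j) (hj : j ≤ w.length) :
    G.dist (w.getVert i) (w.getVert j) = j - i := by
  have hui : G.dist u (w.getVert i) ≤ i := by simpa using w.dist_getVert_le (Nat.zero_le i)
  have hjv : G.dist (w.getVert j) v ≤ w.length - j := by simpa using w.dist_getVert_le hj
  have := (w.take i).reachable.dist_triangle_left (w.getVert j)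
  have := (w.drop j).reachable.dist_triangle_right u
  have := w.dist_getVert_le hij
  omega

end SimpleGraph.Walk

def pathDistMatrix (m : ℕ) : Matrix (Fin m) (Fin m) ℝ :=
  of fun i j => |(i : ℝ) - j|

theorem pathDistMatrix_five :
    pathDistMatrix 5 =
      !![0, 1, 2, 3, 4; 1, 0, 1, 2, 3; 2, 1, 0, 1, 2; 3, 2, 1, 0, 1; 4, 3, 2, 1, 0] := by
  ext i j
  fin_cases i <;> fin_cases j <;> norm_num [pathDistMatrix]

theorem SimpleGraph.Walk.submatrix_getVert_of_length_eq_dist {V : Type*} {G : SimpleGraph V}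
    {u v : V} (w : G.Walk u v) (hw : w.length = G.dist u v) {m : ℕ} (hm : m ≤ w.length + 1) :
    (of fun a b => (G.dist a b : ℝ)).submatrix (fun k : Fin m => w.getVert k)
      (fun k : Fin m => w.getVert k) = pathDistMatrix m := by
  ext k l
  simp only [submatrix_apply, of_apply, pathDistMatrix]
  rcases le_total (k : ℕ) l with hkl | hlk
  · rw [w.dist_getVert_of_length_eq_dist hw hkl (by omega), Nat.cast_sub hkl,
      abs_of_nonpos (by simpa using hkl)]
    ring
  · rw [dist_comm, w.dist_getVert_of_length_eq_dist hw hlk (by omega), Nat.cast_sub hlk,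
      abs_of_nonneg (by simpa using hlk)]

/-- The top two eigenvalues of `D(P₅)`, `≈ 8.288` and `λ₂ ≈ -0.5578`, have palindromic
eigenvectors. On this plane of palindromic vectors (those with `x₀ = x₁ + x₂`) the Rayleigh quotient
of `D(P₅)` is at least `≈ -0.5584`, barely below `λ₂`. -/
def pathFivePlane : Submodule ℝ (Fin 5 → ℝ) :=
  Submodule.span ℝ {![1, 1, 0, 1, 1], ![1, 0, 1, 0, 1]}

theorem finrank_pathFivePlane : finrank ℝ pathFivePlane = 2 := by
  rw [pathFivePlane, ← range_cons_cons_empty _ _ ![], finrank_span_eq_card]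
  · simp
  rw [LinearIndependent.pair_iff]
  intro s t hst
  exact ⟨by simpa using congrFun hst 1, by simpa using congrFun hst 2⟩

theorem le_dotProduct_pathDistMatrix_five_mulVec {x : Fin 5 → ℝ} (hx : x ∈ pathFivePlane) :
    -14 / 25 * (x ⬝ᵥ x) ≤ x ⬝ᵥ (pathDistMatrix 5 *ᵥ x) := by
  obtain ⟨a, b, rfl⟩ := Submodule.mem_span_pair.mp hx
  rw [pathDistMatrix_five]
  simp only [dotProduct, mulVec, Fin.sum_univ_five, smul_cons, smul_eq_mul, mul_one, mul_zero,
    Matrix.smul_empty, Pi.add_apply, cons_val_zero, cons_val_one, add_zero, Matrix.cons_val,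
    zero_add, of_apply, cons_val', cons_val_fin_one, zero_mul, one_mul]
  nlinarith [sq_nonneg (756 * a + 578 * b), sq_nonneg b]

theorem small_second_eigenvalue_implies_diameter_le_three {n : ℕ}
    (G : SimpleGraph (Fin n)) (hG : G.Connected)
    (hD : (Matrix.of fun i j => (G.dist i j : ℝ)).IsHermitian)
    (hlam : eig _ hD 2 ≤ (17 - Real.sqrt 329) / 2) :
    ∀ u v : Fin n, G.dist u v ≤ 3 := by
  intro u v
  by_contra! huv
  obtain ⟨w, hw⟩ := hG.exists_walk_length_eq_dist u v
  let p : Fin 5 → Fin n := fun k => w.getVert k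
  have hp : Injective p := fun k l hkl =>
    Fin.ext <| (w.isPath_of_length_eq_dist hw).getVert_injOn
      (show (k : ℕ) ≤ w.length by omega) (show (l : ℕ) ≤ w.length by omega) hkl
  have hsub := w.submatrix_getVert_of_length_eq_dist hw (m := 5) (by omega)
  have hcard : 2 ≤ #{i | -14 / 25 ≤ hD.eigenvalues i} := by
    rw [← finrank_pathFivePlane]
    refine hD.finrank_le_card_filter_le_eigenvalues_of_submatrix hp _ fun x hx => ?_
    rw [hsub]
    exact le_dotProduct_pathDistMatrix_five_mulVec hx
  have hsqrt : (453 / 25 : ℝ) < Real.sqrt 329 := by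
    rw [Real.lt_sqrt (by norm_num)]
    norm_num
  linarith [le_eig_of_le_card_filter hD two_pos hcard]
end

section
/- For integers s ≥ t+1 ≥ 3, the second largest eigenvalue of the distance matrix of K_s^t equals √2 - 2. -/
/-- The distance matrix of the graph `K_s^t`, obtained from the complete graph `K_s`
by attaching a pendant vertex at each of `t` of its vertices (`t ≤ s`).
Clique vertices are `Sum.inl`, pendant vertices are `Sum.inr`; the `i`-th pendant
vertex is attached to the `i`-th clique vertex. -/
def DKst (s t : ℕ) : Matrix (Fin s ⊕ Fin t) (Fin s ⊕ Fin t) ℝ :=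
  fun x y =>
    match x, y with
    | .inl a, .inl b => if a = b then 0 else 1
    | .inl a, .inr b => if (a : ℕ) = (b : ℕ) then 1 else 2
    | .inr a, .inl b => if (a : ℕ) = (b : ℕ) then 1 else 2
    | .inr a, .inr b => if a = b then 0 else 3

/-!
`√2 - 2` is an eigenvalue of the distance matrix `D`: for every `y : Fin t → ℝ` summing to zero,
the vector equal to `y` on the clique vertices carrying a pendant edge, to `0` on the other clique
vertices and to `(1 - √2) • y` on the pendant vertices is an eigenvector. As `tr D = 0` and
`√2 - 2 < 0`, some other eigenvalue is positive, so at least two eigenvalues are `≥ √2 - 2`.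
Conversely, `D - (√2 - 2) • 1 ≤ u uᵀ` as quadratic forms, where `u` is `1` on the clique and `2`
on the pendant vertices. If two eigenvalues exceeded `√2 - 2`, the quadratic form of
`D - (√2 - 2) • 1` would be positive on a nonzero vector of the span of their eigenvectors
orthogonal to `u`, where `u uᵀ` vanishes.
-/

open Matrix Finset

namespace List

variable {L : List ℝ} {k : ℕ} {v : ℝ}

theorem SortedLE.length_sub_le_countP_lt (hL : L.SortedLE) (hk : k < L.length) (hv : v < L[k]) :
    L.length - k ≤ L.countP (v < ·) :=
  calc L.length - k = (L.drop k).countP (v < ·) := by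
        rw [countP_eq_length.2, length_drop]
        intro x hx
        obtain ⟨i, hi, rfl⟩ := mem_iff_getElem.1 hx
        rw [getElem_drop, decide_eq_true_eq]
        exact hv.trans_le (hL.getElem_le_getElem_of_le (by omega))
    _ ≤ L.countP (v < ·) := (drop_sublist k L).countP_le

theorem SortedLE.countP_le_le_length_sub (hL : L.SortedLE) (hk : k < L.length) (hv : L[k] < v) :
    L.countP (v ≤ ·) ≤ L.length - (k + 1) := by
  have hsplit := countP_append (p := (v ≤ ·)) (l₁ := L.take (k + 1)) (l₂ := L.drop (k + 1))
  rw [take_append_drop] at hsplit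
  have htake : (L.take (k + 1)).countP (v ≤ ·) = 0 := by
    rw [countP_eq_zero]
    intro x hx
    obtain ⟨i, hi, rfl⟩ := mem_iff_getElem.1 hx
    rw [getElem_take, decide_eq_true_eq, not_le]
    rw [length_take] at hi
    exact (hL.getElem_le_getElem_of_le (by omega)).trans_lt hv
  have hdrop := (L.drop (k + 1)).countP_le_length (p := (v ≤ ·))
  rw [length_drop] at hdrop
  omega

end List

namespace Matrix.IsHermitian

variable {n : Type*} [Fintype n] [DecidableEq n] {A : Matrix n n ℝ}

theorem countP_sortedEigenvalues (hA : A.IsHermitian) (p : ℝ → Prop) [DecidablePred p] :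
    (sortedEigenvalues A hA).countP p = #{i | p (hA.eigenvalues i)} := by
  rw [← Multiset.coe_countP, sortedEigenvalues, Multiset.sort_eq, Multiset.countP_map,
    card_def, filter_val]

theorem eig_eq_of_card_lt_le (hA : A.IsHermitian) {k : ℕ} {v : ℝ}
    (hlt : #{i | v < hA.eigenvalues i} < k) (hle : k ≤ #{i | v ≤ hA.eigenvalues i}) :
    eig A hA k = v := by
  have hsorted : (sortedEigenvalues A hA).SortedLE := (Multiset.pairwise_sort _ _).sortedLE
  have hlen : (sortedEigenvalues A hA).length = Fintype.card n := by
    rw [sortedEigenvalues, Multiset.length_sort, Multiset.card_map, card_val, card_univ]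
  have hkn : k ≤ Fintype.card n := hle.trans (card_le_univ _)
  have hidx : Fintype.card n - k < (sortedEigenvalues A hA).length := by omega
  rw [← hA.countP_sortedEigenvalues] at hlt hle
  rw [eig, getElem!_pos (sortedEigenvalues A hA) _ hidx]
  rcases lt_trichotomy (sortedEigenvalues A hA)[Fintype.card n - k] v with h | h | h
  · have := hsorted.countP_le_le_length_sub hidx h
    omega
  · exact h
  · have := hsorted.length_sub_le_countP_lt hidx h
    omega

theorem exists_eigenvalues_eq_of_mulVec_eq_smul (hA : A.IsHermitian) {x : n → ℝ} {μ : ℝ}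
    (hx : x ≠ 0) (h : A *ᵥ x = μ • x) : ∃ i, hA.eigenvalues i = μ := by
  have hμ : μ ∈ spectrum ℝ (toLin' A) :=
    (Module.End.hasEigenvalue_of_hasEigenvector
      ⟨Module.End.mem_eigenspace_iff.2 (by rwa [toLin'_apply]), hx⟩).mem_spectrum
  rwa [spectrum_toLin', hA.spectrum_real_eq_range_eigenvalues] at hμ

theorem exists_ne_eigenvalues_pos_of_trace_eq_zero (hA : A.IsHermitian) (htr : A.trace = 0) {i : n}
    (hi : hA.eigenvalues i < 0) : ∃ j ≠ i, 0 < hA.eigenvalues j := by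
  by_contra! h
  have hrest : ∑ j ∈ univ.erase i, hA.eigenvalues j ≤ 0 :=
    sum_nonpos fun j hj => h j (ne_of_mem_erase hj)
  have hsum := hA.trace_eq_sum_eigenvalues
  rw [htr, ← add_sum_erase _ _ (mem_univ i)] at hsum
  simp only [RCLike.ofReal_real_eq_id, id] at hsum
  linarith

theorem eigenvectorBasis_dotProduct (hA : A.IsHermitian) (i j : n) :
    ⇑(hA.eigenvectorBasis i) ⬝ᵥ ⇑(hA.eigenvectorBasis j) = if i = j then 1 else 0 := by
  simpa [EuclideanSpace.inner_eq_star_dotProduct, eq_comm] using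
    orthonormal_iff_ite.1 hA.eigenvectorBasis.orthonormal j i

theorem card_lt_eigenvalues_le_one (hA : A.IsHermitian) {u : n → ℝ} {v : ℝ}
    (hq : ∀ x, x ⬝ᵥ A *ᵥ x - v * (x ⬝ᵥ x) ≤ (u ⬝ᵥ x) ^ 2) :
    #{i | v < hA.eigenvalues i} ≤ 1 := by
  refine card_le_one.2 fun i hi j hj => by_contra fun hij => ?_
  simp only [mem_filter, mem_univ, true_and] at hi hj
  set w := fun k => ⇑(hA.eigenvectorBasis k)
  have hz : ∀ α β : ℝ, u ⬝ᵥ (α • w i + β • w j) = 0 → α = 0 ∧ β = 0 := by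
    intro α β hu
    have h := hq (α • w i + β • w j)
    simp only [w, mulVec_add, mulVec_smul, hA.mulVec_eigenvectorBasis, dotProduct_add,
      add_dotProduct, dotProduct_smul, smul_dotProduct, hA.eigenvectorBasis_dotProduct, hij,
      Ne.symm hij, if_true, if_false, smul_eq_mul, hu] at h
    have hα : α ^ 2 * (hA.eigenvalues i - v) ≤ 0 := by
      nlinarith [mul_nonneg (sq_nonneg β) (sub_nonneg.2 hj.le)]
    have hβ : β ^ 2 * (hA.eigenvalues j - v) ≤ 0 := by
      nlinarith [mul_nonneg (sq_nonneg α) (sub_nonneg.2 hi.le)]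
    exact ⟨(sq_nonpos_iff α).1 (nonpos_of_mul_nonpos_left hα (sub_pos.2 hi)),
      (sq_nonpos_iff β).1 (nonpos_of_mul_nonpos_left hβ (sub_pos.2 hj))⟩
  by_cases hui : u ⬝ᵥ w i = 0
  · exact one_ne_zero (hz 1 0 (by simpa using hui)).1
  · refine hui (neg_eq_zero.1 (hz (u ⬝ᵥ w j) (-(u ⬝ᵥ w i)) ?_).2)
    simp only [dotProduct_add, dotProduct_smul, smul_eq_mul]
    ring

end Matrix.IsHermitian

section DKst

variable {s t : ℕ}

theorem sum_ite_val_eq_castLE (hts : t ≤ s) (i : Fin t) (f : Fin s → ℝ) :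
    ∑ j : Fin s, (if (i : ℕ) = (j : ℕ) then f j else 0) = f (Fin.castLE hts i) := by
  rw [Fintype.sum_eq_single (Fin.castLE hts i) fun j hj => if_neg fun h => hj (Fin.ext h.symm)]
  simp

theorem DKst_mulVec_inl (x : Fin s ⊕ Fin t → ℝ) (a : Fin s) :
    (DKst s t *ᵥ x) (.inl a) = ∑ j, x (.inl j) - x (.inl a) + 2 * ∑ i, x (.inr i)
      - ∑ i : Fin t, if (a : ℕ) = i then x (.inr i) else 0 := by
  have hC (j : Fin s) : DKst s t (.inl a) (.inl j) * x (.inl j)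
      = x (.inl j) - if a = j then x (.inl j) else 0 := by
    simp only [DKst]; split_ifs <;> ring
  have hP (i : Fin t) : DKst s t (.inl a) (.inr i) * x (.inr i)
      = 2 * x (.inr i) - if (a : ℕ) = i then x (.inr i) else 0 := by
    simp only [DKst]; split_ifs <;> ring
  simp only [mulVec, dotProduct, Fintype.sum_sum_type, hC, hP, sum_sub_distrib, sum_ite_eq,
    mem_univ, if_true, ← mul_sum]
  ring

theorem DKst_mulVec_inr (hts : t ≤ s) (x : Fin s ⊕ Fin t → ℝ) (i : Fin t) :
    (DKst s t *ᵥ x) (.inr i) = 2 * ∑ j, x (.inl j) - x (.inl (Fin.castLE hts i))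
      + 3 * ∑ k, x (.inr k) - 3 * x (.inr i) := by
  have hC (j : Fin s) : DKst s t (.inr i) (.inl j) * x (.inl j)
      = 2 * x (.inl j) - if (i : ℕ) = j then x (.inl j) else 0 := by
    simp only [DKst]; split_ifs <;> ring
  have hP (k : Fin t) : DKst s t (.inr i) (.inr k) * x (.inr k)
      = 3 * x (.inr k) - if i = k then 3 * x (.inr k) else 0 := by
    simp only [DKst]; split_ifs <;> ring
  simp only [mulVec, dotProduct, Fintype.sum_sum_type, hC, hP, sum_sub_distrib, sum_ite_eq,
    mem_univ, if_true, ← mul_sum, sum_ite_val_eq_castLE hts]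
  ring

theorem DKst_trace : (DKst s t).trace = 0 := by
  simp [trace, DKst, Fintype.sum_sum_type]

noncomputable def kstEigenvector (s : ℕ) (y : Fin t → ℝ) : Fin s ⊕ Fin t → ℝ :=
  Sum.elim (fun a => ∑ i : Fin t, if (a : ℕ) = i then y i else 0) fun i => (1 - √2) * y i

theorem DKst_mulVec_kstEigenvector (hts : t ≤ s) {y : Fin t → ℝ} (hy : ∑ i, y i = 0) :
    DKst s t *ᵥ kstEigenvector s y = (√2 - 2) • kstEigenvector s y := by
  have hC : ∑ j, kstEigenvector s y (.inl j) = 0 := by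
    simp only [kstEigenvector, Sum.elim_inl]
    rw [sum_comm]
    simp only [@eq_comm ℕ, sum_ite_val_eq_castLE hts, hy]
  have hP : ∑ i, kstEigenvector s y (.inr i) = 0 := by
    simp only [kstEigenvector, Sum.elim_inr, ← mul_sum, hy, mul_zero]
  have hr : √2 ^ 2 = 2 := Real.sq_sqrt zero_le_two
  ext (a | i)
  · rw [DKst_mulVec_inl, hC, hP]
    simp only [kstEigenvector, Sum.elim_inl, Sum.elim_inr, Pi.smul_apply, smul_eq_mul,
      ← mul_ite_zero, ← mul_sum]
    ring
  · rw [DKst_mulVec_inr hts, hC, hP]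
    simp only [kstEigenvector, Sum.elim_inl, Sum.elim_inr, Pi.smul_apply, smul_eq_mul,
      Fin.val_castLE, Fin.val_inj, sum_ite_eq, mem_univ, if_true]
    linear_combination y i * hr

theorem exists_eigenvalues_DKst_eq_sqrt_two_sub_two (hD : (DKst s t).IsHermitian) (ht : 2 ≤ t)
    (hts : t ≤ s) : ∃ i, hD.eigenvalues i = √2 - 2 := by
  let y : Fin t → ℝ := Pi.single ⟨0, by omega⟩ 1 - Pi.single ⟨1, by omega⟩ 1
  have hy : ∑ i, y i = 0 := by simp [y]
  refine hD.exists_eigenvalues_eq_of_mulVec_eq_smul (fun h => ?_)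
    (DKst_mulVec_kstEigenvector hts hy)
  have h₀ : 1 - √2 = 0 := by
    simpa [kstEigenvector, y, Pi.single_apply, Fin.ext_iff] using congrFun h (.inr ⟨0, by omega⟩)
  linarith [Real.one_lt_sqrt_two]

theorem sum_sq_castLE_le (hts : t ≤ s) (f : Fin s → ℝ) :
    ∑ i : Fin t, f (Fin.castLE hts i) ^ 2 ≤ ∑ j, f j ^ 2 :=
  calc ∑ i : Fin t, f (Fin.castLE hts i) ^ 2 = ∑ j ∈ univ.map (Fin.castLEEmb hts), f j ^ 2 :=
        by rw [sum_map]; rfl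
    _ ≤ ∑ j, f j ^ 2 := sum_le_sum_of_subset_of_nonneg (subset_univ _) fun _ _ _ => sq_nonneg _

theorem DKst_dotProduct_mulVec (hts : t ≤ s) (x : Fin s ⊕ Fin t → ℝ) :
    x ⬝ᵥ DKst s t *ᵥ x = (∑ j, x (.inl j)) ^ 2 - ∑ j, x (.inl j) ^ 2
      + 4 * (∑ j, x (.inl j)) * (∑ i, x (.inr i)) + 3 * (∑ i, x (.inr i)) ^ 2
      - 3 * ∑ i, x (.inr i) ^ 2 - 2 * ∑ i, x (.inl (Fin.castLE hts i)) * x (.inr i) := by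
  have hcross : ∑ j, x (.inl j) * ∑ i : Fin t, (if (j : ℕ) = i then x (.inr i) else 0)
      = ∑ i, x (.inl (Fin.castLE hts i)) * x (.inr i) := by
    simp only [mul_sum, mul_ite_zero]
    rw [sum_comm]
    simp only [@eq_comm ℕ, sum_ite_val_eq_castLE hts]
  simp only [dotProduct, Fintype.sum_sum_type, DKst_mulVec_inl, DKst_mulVec_inr hts, mul_sub,
    mul_add, sum_sub_distrib, sum_add_distrib, hcross, ← sum_mul,
    mul_comm (x (.inr _)) (x (.inl _)), mul_left_comm _ (3 : ℝ), ← mul_sum, ← sq]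
  ring

theorem sqrt_two_sub_one_mul_sq_add_nonneg (a b : ℝ) :
    0 ≤ (√2 - 1) * a ^ 2 + 2 * (a * b) + (√2 + 1) * b ^ 2 := by
  have hr : √2 ^ 2 = 2 := Real.sq_sqrt zero_le_two
  have hr1 : 0 ≤ √2 - 1 := sub_nonneg.2 Real.one_lt_sqrt_two.le
  have h := mul_nonneg hr1 (sq_nonneg (a + (√2 + 1) * b))
  linear_combination h + (b ^ 2 * (√2 + 1) + 2 * a * b) * hr

/-- The slack `u uᵀ - D - (2 - √2) • 1` is the all-ones matrix on the pendant vertices, plus for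
each pendant edge the singular positive semidefinite block `[[√2 - 1, 1], [1, √2 + 1]]`, plus
`√2 - 1` at each clique vertex without a pendant edge. -/
theorem DKst_quadForm_le (hts : t ≤ s) (x : Fin s ⊕ Fin t → ℝ) :
    x ⬝ᵥ DKst s t *ᵥ x - (√2 - 2) * (x ⬝ᵥ x)
      ≤ (Sum.elim (fun _ => 1) (fun _ => 2) ⬝ᵥ x) ^ 2 := by
  have hr1 : 0 ≤ √2 - 1 := sub_nonneg.2 Real.one_lt_sqrt_two.le
  have hdot : x ⬝ᵥ x = ∑ j, x (.inl j) ^ 2 + ∑ i, x (.inr i) ^ 2 := by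
    simp only [dotProduct, Fintype.sum_sum_type, sq]
  have hu : Sum.elim (fun _ => 1) (fun _ => 2) ⬝ᵥ x = ∑ j, x (.inl j) + 2 * ∑ i, x (.inr i) := by
    simp only [dotProduct, Fintype.sum_sum_type, Sum.elim_inl, Sum.elim_inr, one_mul, mul_sum]
  have hpairs : 0 ≤ (√2 - 1) * ∑ i, x (.inl (Fin.castLE hts i)) ^ 2
      + 2 * ∑ i, x (.inl (Fin.castLE hts i)) * x (.inr i) + (√2 + 1) * ∑ i, x (.inr i) ^ 2 := by
    simpa only [mul_sum, ← sum_add_distrib] using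
      sum_nonneg fun i _ =>
        sqrt_two_sub_one_mul_sq_add_nonneg (x (.inl (Fin.castLE hts i))) (x (.inr i))
  have hQ := sum_sq_castLE_le hts fun j => x (.inl j)
  rw [DKst_dotProduct_mulVec hts, hdot, hu]
  nlinarith [sq_nonneg (∑ i, x (.inr i)), mul_nonneg hr1 (sub_nonneg.2 hQ)]

end DKst

theorem second_eigenvalue_Kst {s t : ℕ} (ht : 2 ≤ t) (hst : t + 1 ≤ s)
    (hD : (DKst s t).IsHermitian) :
    eig _ hD 2 = Real.sqrt 2 - 2 := by
  have hts : t ≤ s := by omega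
  obtain ⟨i₀, hi₀⟩ := exists_eigenvalues_DKst_eq_sqrt_two_sub_two hD ht hts
  have hneg : √2 - 2 < 0 := by linarith [Real.sqrt_two_lt_three_halves]
  obtain ⟨j, hj, hj₀⟩ := hD.exists_ne_eigenvalues_pos_of_trace_eq_zero DKst_trace (hi₀ ▸ hneg)
  refine hD.eig_eq_of_card_lt_le
    ((hD.card_lt_eigenvalues_le_one (DKst_quadForm_le hts)).trans_lt one_lt_two) ?_
  calc 2 = #{j, i₀} := (card_pair hj).symm
    _ ≤ #{i | √2 - 2 ≤ hD.eigenvalues i} := card_le_card fun i hi => by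
      rcases mem_insert.1 hi with rfl | hi
      · simpa using (hneg.trans hj₀).le
      · simp [mem_singleton.1 hi, hi₀]
end
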